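/- Let g > 0, G > 0, A_{aa} > 0, A_{ab} ∈ ℝ, A_cc > 0 and F^x_b, F^y_b ∈ ℝ be constants. Then the function (τ, F^x_a, F^y_a, U^x, U^y) ↦ ( (U^x)² + (U^y)² )/2 + g/(2τ) + (G/2)·( Σ_{i∈{x,y}} ( (F^i_a)² A_{aa} + 2 F^i_a F^i_b A_{ab} ) + A_cc/τ² ) is strictly convex on the open convex set { τ > 0 } × ℝ⁴. -/

import Mathlib

/-!
The energy is a sum of functions of one coordinate each: `g / (2τ) + G A_cc / (2τ²)` of `τ`,
a quadratic with positive leading coefficient `G A_aa / 2` of each `F^i_a`, and `U² / 2` of each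
velocity component. Each is strictly convex on its factor, and a separable sum of strictly convex
functions is strictly convex on the product set: along a segment between distinct points some
coordinate moves, and its summand gives the strict inequality.
-/

open Set

theorem StrictConvexOn.prod_add {𝕜 E F β : Type*} [Semiring 𝕜] [PartialOrder 𝕜]
    [AddCommMonoid E] [Module 𝕜 E] [AddCommMonoid F] [Module 𝕜 F]
    [AddCommMonoid β] [PartialOrder β] [IsOrderedCancelAddMonoid β] [Module 𝕜 β]
    {s : Set E} {t : Set F} {f : E → β} {g : F → β}
    (hf : StrictConvexOn 𝕜 s f) (hg : StrictConvexOn 𝕜 t g) :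
    StrictConvexOn 𝕜 (s ×ˢ t) fun p => f p.1 + g p.2 := by
  refine ⟨hf.1.prod hg.1, ?_⟩
  rintro ⟨x₁, x₂⟩ ⟨hx₁, hx₂⟩ ⟨y₁, y₂⟩ ⟨hy₁, hy₂⟩ hxy a b ha hb hab
  have hsum : ∀ u v w z : β, a • (u + v) + b • (w + z) = (a • u + b • w) + (a • v + b • z) :=
    fun u v w z => by rw [smul_add, smul_add, add_add_add_comm]
  simp only [Prod.smul_mk, Prod.mk_add_mk, hsum]
  by_cases h₁ : x₁ = y₁
  · have h₂ : x₂ ≠ y₂ := fun h₂ => hxy (Prod.ext h₁ h₂)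
    exact add_lt_add_of_le_of_lt (hf.convexOn.2 hx₁ hy₁ ha.le hb.le hab)
      (hg.2 hx₂ hy₂ h₂ ha hb hab)
  · exact add_lt_add_of_lt_of_le (hf.2 hx₁ hy₁ h₁ ha hb hab)
      (hg.convexOn.2 hx₂ hy₂ ha.le hb.le hab)

theorem StrictConvexOn.const_mul {𝕜 E : Type*} [CommSemiring 𝕜] [PartialOrder 𝕜]
    [IsStrictOrderedRing 𝕜] [AddCommMonoid E] [SMul 𝕜 E] {s : Set E} {f : E → 𝕜} {c : 𝕜}
    (hf : StrictConvexOn 𝕜 s f) (hc : 0 < c) : StrictConvexOn 𝕜 s fun x => c * f x := by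
  refine ⟨hf.1, fun x hx y hy hxy a b ha hb hab => ?_⟩
  calc c * f (a • x + b • y) < c * (a • f x + b • f y) :=
        mul_lt_mul_of_pos_left (hf.2 hx hy hxy ha hb hab) hc
    _ = a • (c * f x) + b • (c * f y) := by simp only [smul_eq_mul]; ring

theorem strictConvexOn_univ_mul_sq_add_mul {a : ℝ} (ha : 0 < a) (b : ℝ) :
    StrictConvexOn ℝ univ fun x : ℝ => a * x ^ 2 + b * x :=
  ((Even.strictConvexOn_pow even_two two_ne_zero).const_mul ha).add_convexOn
    ((LinearMap.mul ℝ ℝ b).convexOn convex_univ)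

/-- the Lagrangian free energy is a strictly convex entropy.
For constants `g, G, A_aa, A_cc > 0` and `A_ab, F^x_b, F^y_b ∈ ℝ`, the function
`(τ, F^x_a, F^y_a, U^x, U^y) ↦ ((U^x)² + (U^y)²)/2 + g/(2τ)
  + (G/2)·( Σ_i ((F^i_a)²·A_aa + 2·F^i_a·F^i_b·A_ab) + A_cc/τ² )`
is strictly convex on the open convex set `{τ > 0} × ℝ⁴`. -/
theorem svm_lagrangian_energy_strictConvex (g G Aaa Acc : ℝ) (Aab Fxb Fyb : ℝ)
    (hg : 0 < g) (hG : 0 < G) (hAaa : 0 < Aaa) (hAcc : 0 < Acc) :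
    StrictConvexOn ℝ {p : ℝ × ℝ × ℝ × ℝ × ℝ | 0 < p.1}
      (fun p : ℝ × ℝ × ℝ × ℝ × ℝ =>
        ((p.2.2.2.1) ^ 2 + (p.2.2.2.2) ^ 2) / 2 + g / (2 * p.1)
          + (G / 2) * (((p.2.1) ^ 2 * Aaa + 2 * p.2.1 * Fxb * Aab)
              + ((p.2.2.1) ^ 2 * Aaa + 2 * p.2.2.1 * Fyb * Aab)
              + Acc / p.1 ^ 2)) := by
  have hτ : StrictConvexOn ℝ (Ioi 0)
      fun t : ℝ => g / 2 * t ^ (-1 : ℤ) + G * Acc / 2 * t ^ (-2 : ℤ) :=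
    ((strictConvexOn_zpow (by norm_num) (by norm_num)).const_mul (by positivity)).add
      ((strictConvexOn_zpow (by norm_num) (by norm_num)).const_mul (by positivity))
  have hF (Fb : ℝ) :=
    strictConvexOn_univ_mul_sq_add_mul (show 0 < G / 2 * Aaa by positivity) (G * Fb * Aab)
  have hU := strictConvexOn_univ_mul_sq_add_mul (show (0 : ℝ) < 1 / 2 by norm_num) 0
  have hset : {p : ℝ × ℝ × ℝ × ℝ × ℝ | 0 < p.1} = Ioi 0 ×ˢ univ ×ˢ univ ×ˢ univ ×ˢ univ := by
    ext; simp
  rw [hset]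
  refine (hτ.prod_add ((hF Fxb).prod_add ((hF Fyb).prod_add (hU.prod_add hU)))).congr
    fun p _ => ?_
  simp only [zpow_neg, zpow_one, zpow_two]
  ring
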